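/- Let F be a field of characteristic 2 and let α, β, a, b ∈ F with β ≠ 0 and a² + a·b + b²·α ≠ 0. Then there is an F-algebra isomorphism [α, β) ≅ [α, (a² + a·b + b²·α)·β). -/

import Mathlib

open scoped TensorProduct

/-- The relations defining the characteristic two quaternion symbol algebra `[α, β)`:
`x² + x = α`, `y² = β`, `xy + yx = y`. -/
inductive QuatSymbolRel (F : Type*) [CommRing F] (α β : F) :
    FreeAlgebra F (Fin 2) → FreeAlgebra F (Fin 2) → Prop
  | x_rel : QuatSymbolRel F α β
      (FreeAlgebra.ι F (0 : Fin 2) * FreeAlgebra.ι F (0 : Fin 2) + FreeAlgebra.ι F (0 : Fin 2))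
      (algebraMap F (FreeAlgebra F (Fin 2)) α)
  | y_rel : QuatSymbolRel F α β
      (FreeAlgebra.ι F (1 : Fin 2) * FreeAlgebra.ι F (1 : Fin 2))
      (algebraMap F (FreeAlgebra F (Fin 2)) β)
  | xy_rel : QuatSymbolRel F α β
      (FreeAlgebra.ι F (0 : Fin 2) * FreeAlgebra.ι F (1 : Fin 2) +
        FreeAlgebra.ι F (1 : Fin 2) * FreeAlgebra.ι F (0 : Fin 2))
      (FreeAlgebra.ι F (1 : Fin 2))

/-- The characteristic two quaternion symbol algebra `[α, β)` over `F`: the `F`-algebra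
generated by `x, y` subject to `x² + x = α`, `y² = β`, `xy + yx = y`. -/
def QuatSymbol (F : Type*) [CommRing F] (α β : F) :=
  RingQuot (QuatSymbolRel F α β)

noncomputable instance (F : Type*) [CommRing F] (α β : F) : Ring (QuatSymbol F α β) :=
  inferInstanceAs (Ring (RingQuot (QuatSymbolRel F α β)))

noncomputable instance (F : Type*) [CommRing F] (α β : F) : Algebra F (QuatSymbol F α β) :=
  inferInstanceAs (Algebra F (RingQuot (QuatSymbolRel F α β)))

/-! The subalgebra `F[x]` is the Artin–Schreier extension of `F` by `x² + x = α`, and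
`y u = ū y` for `u ∈ F[x]`, where `ū` is the Galois conjugate `x ↦ x + 1`. Hence for
`u = c + d x` the pair `x, u y` again satisfies `x (u y) + (u y) x = u y`, while
`(u y)² = u ū y² = N(u) β` with `N(c + d x) = c² + c d + d² α`. So `x ↦ x, y ↦ u y` defines a
map `[α, N(u) β) → [α, β)`, and when `N(u) ≠ 0` the map for `u⁻¹ = ū / N(u)` is its inverse. -/

namespace QuatSymbol

section CommRing

variable {F : Type*} [CommRing F] {α β : F}

noncomputable def x : QuatSymbol F α β :=
  RingQuot.mkAlgHom F (QuatSymbolRel F α β) (FreeAlgebra.ι F 0)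

noncomputable def y : QuatSymbol F α β :=
  RingQuot.mkAlgHom F (QuatSymbolRel F α β) (FreeAlgebra.ι F 1)

theorem x_mul_x_add_x : (x : QuatSymbol F α β) * x + x = algebraMap F _ α := by
  have h := RingQuot.mkAlgHom_rel F (QuatSymbolRel.x_rel (α := α) (β := β))
  simp only [map_add, map_mul, AlgHom.commutes] at h
  exact h

theorem y_mul_y : (y : QuatSymbol F α β) * y = β • 1 := by
  have h := RingQuot.mkAlgHom_rel F (QuatSymbolRel.y_rel (α := α) (β := β))
  simp only [map_mul, AlgHom.commutes] at h
  rwa [← Algebra.algebraMap_eq_smul_one]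

theorem x_mul_y_add_y_mul_x : (x : QuatSymbol F α β) * y + y * x = y := by
  have h := RingQuot.mkAlgHom_rel F (QuatSymbolRel.xy_rel (α := α) (β := β))
  simp only [map_add, map_mul] at h
  exact h

section lift

variable {A : Type*} [Semiring A] [Algebra F A]

noncomputable def lift (p q : A) (hp : p * p + p = algebraMap F A α)
    (hq : q * q = algebraMap F A β) (hpq : p * q + q * p = q) :
    QuatSymbol F α β →ₐ[F] A :=
  RingQuot.liftAlgHom F ⟨FreeAlgebra.lift F ![p, q], fun _ _ r => by cases r <;> simpa⟩

variable (p q : A) (hp : p * p + p = algebraMap F A α) (hq : q * q = algebraMap F A β)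
  (hpq : p * q + q * p = q)

@[simp]
theorem lift_x : lift p q hp hq hpq x = p :=
  (RingQuot.liftAlgHom_mkAlgHom_apply _ _ _ _).trans (by simp)

@[simp]
theorem lift_y : lift p q hp hq hpq y = q :=
  (RingQuot.liftAlgHom_mkAlgHom_apply _ _ _ _).trans (by simp)

end lift

theorem algHom_ext {A : Type*} [Semiring A] [Algebra F A] {f g : QuatSymbol F α β →ₐ[F] A}
    (hx : f x = g x) (hy : f y = g y) : f = g := by
  refine RingQuot.ringQuot_ext' _ _ _ (FreeAlgebra.hom_ext (funext fun i => ?_))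
  fin_cases i
  exacts [hx, hy]

theorem x_mul_x : (x : QuatSymbol F α β) * x = α • 1 - x := by
  rw [← Algebra.algebraMap_eq_smul_one, ← x_mul_x_add_x, add_sub_cancel_right]

theorem y_mul_x : (y : QuatSymbol F α β) * x = y - x * y := by
  rw [eq_sub_iff_add_eq', x_mul_y_add_y_mul_x]

noncomputable def linX (c d : F) : QuatSymbol F α β := c • 1 + d • x

@[simp]
theorem linX_one_zero : (linX 1 0 : QuatSymbol F α β) = 1 := by
  simp [linX]

theorem linX_mul_linX (c d c' d' : F) :
    (linX c d : QuatSymbol F α β) * linX c' d' =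
      linX (c * c' + d * d' * α) (c * d' + d * c' - d * d') := by
  simp only [linX, add_mul, mul_add, smul_mul_assoc, mul_smul_comm, one_mul, mul_one, x_mul_x]
  module

theorem x_mul_linX (c d : F) : (x : QuatSymbol F α β) * linX c d = linX c d * x := by
  simp only [linX, add_mul, mul_add, smul_mul_assoc, mul_smul_comm, one_mul, mul_one]

theorem y_mul_linX (c d : F) :
    (y : QuatSymbol F α β) * linX c d = linX (c + d) (-d) * y := by
  simp only [linX, add_mul, mul_add, smul_mul_assoc, mul_smul_comm, one_mul, mul_one, y_mul_x]
  module

theorem x_mul_linX_mul_y_add (c d : F) :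
    (x : QuatSymbol F α β) * (linX c d * y) + linX c d * y * x = linX c d * y := by
  rw [← mul_assoc, x_mul_linX, mul_assoc, mul_assoc, ← mul_add, x_mul_y_add_y_mul_x]

theorem map_linX {β' : F} (f : QuatSymbol F α β →ₐ[F] QuatSymbol F α β') (hf : f x = x)
    (c d : F) : f (linX c d) = linX c d := by
  simp [linX, hf]

section CharTwo

variable [CharP F 2]

theorem linX_mul_y_mul_self (c d : F) :
    (linX c d : QuatSymbol F α β) * y * (linX c d * y) =
      algebraMap F _ ((c ^ 2 + c * d + d ^ 2 * α) * β) := by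
  have hnorm : (linX (c * (c + d) + d * -d * α) (c * -d + d * (c + d) - d * -d) :
      QuatSymbol F α β) = linX (c ^ 2 + c * d + d ^ 2 * α) 0 := by
    congr 1
    · linear_combination -(d ^ 2 * α) * CharTwo.two_eq_zero (R := F)
    · linear_combination d ^ 2 * CharTwo.two_eq_zero (R := F)
  rw [mul_assoc, ← mul_assoc y, y_mul_linX, mul_assoc, ← mul_assoc, linX_mul_linX, hnorm,
    y_mul_y, linX, zero_smul, add_zero, smul_mul_smul, one_mul,
    ← Algebra.algebraMap_eq_smul_one]

noncomputable def twist {β' : F} (c d : F) (h : (c ^ 2 + c * d + d ^ 2 * α) * β = β') :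
    QuatSymbol F α β' →ₐ[F] QuatSymbol F α β :=
  lift x (linX c d * y) x_mul_x_add_x (by rw [linX_mul_y_mul_self, h])
    (x_mul_linX_mul_y_add c d)

variable {β' : F}

@[simp]
theorem twist_x (c d : F) (h : (c ^ 2 + c * d + d ^ 2 * α) * β = β') :
    twist c d h x = x :=
  lift_x ..

@[simp]
theorem twist_y (c d : F) (h : (c ^ 2 + c * d + d ^ 2 * α) * β = β') :
    twist c d h y = linX c d * y :=
  lift_y ..

theorem twist_comp_twist {c d c' d' : F} (h : (c ^ 2 + c * d + d ^ 2 * α) * β = β')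
    (h' : (c' ^ 2 + c' * d' + d' ^ 2 * α) * β' = β)
    (h₁ : c' * c + d' * d * α = 1) (h₂ : c' * d + d' * c - d' * d = 0) :
    (twist c d h).comp (twist c' d' h') = AlgHom.id F _ := by
  refine algHom_ext (by simp) ?_
  rw [AlgHom.comp_apply, twist_y, map_mul, map_linX _ (twist_x c d h), twist_y, ← mul_assoc,
    linX_mul_linX, h₁, h₂, linX_one_zero, one_mul, AlgHom.id_apply]

end CharTwo

end CommRing

noncomputable def twistEquiv {F : Type*} [Field F] [CharP F 2] {α β β' : F} (c d : F)
    (hN : c ^ 2 + c * d + d ^ 2 * α ≠ 0) (h : (c ^ 2 + c * d + d ^ 2 * α) * β = β') :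
    QuatSymbol F α β' ≃ₐ[F] QuatSymbol F α β := by
  generalize hN_def : c ^ 2 + c * d + d ^ 2 * α = N at hN
  have hconj : (c + d) ^ 2 + (c + d) * d + d ^ 2 * α = N := by
    linear_combination hN_def + (c * d + d ^ 2) * CharTwo.two_eq_zero (R := F)
  have h' : (((c + d) / N) ^ 2 + (c + d) / N * (d / N) + (d / N) ^ 2 * α) * β' = β := by
    calc _ = ((c + d) ^ 2 + (c + d) * d + d ^ 2 * α) / N ^ 2 * (N * β) := by
          rw [← h, hN_def]; ring
      _ = β := by rw [hconj]; field_simp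
  have h₁ : (c + d) / N * c + d / N * d * α = 1 := by
    field_simp
    linear_combination hN_def
  have h₂ : (c + d) / N * d + d / N * c - d / N * d = 0 := by
    field_simp
    linear_combination c * d * CharTwo.two_eq_zero (R := F)
  exact AlgEquiv.ofAlgHom (twist c d h) (twist ((c + d) / N) (d / N) h')
    (twist_comp_twist h h' h₁ h₂) (twist_comp_twist h' h (by linear_combination h₁)
      (by linear_combination h₂))

end QuatSymbol

theorem quatSymbol_lambda1_inseparable_general (F : Type*) [Field F] [CharP F 2] (α β a b : F)
    (h : a ^ 2 + a * b + b ^ 2 * α ≠ 0) :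
    Nonempty (QuatSymbol F α β ≃ₐ[F] QuatSymbol F α ((a ^ 2 + a * b + b ^ 2 * α) * β)) :=
  ⟨(QuatSymbol.twistEquiv a b h rfl).symm⟩

/-- A `Λ₁` step on one symbol: `[α,β) ≅ [α, (a² + ab + b²α)·β)` when `a² + ab + b²α ≠ 0`. -/
theorem quatSymbol_lambda1_inseparable (F : Type*) [Field F] [CharP F 2] (α β a b : F)
    (hβ : β ≠ 0) (h : a ^ 2 + a * b + b ^ 2 * α ≠ 0) :
    Nonempty (QuatSymbol F α β ≃ₐ[F] QuatSymbol F α ((a ^ 2 + a * b + b ^ 2 * α) * β)) :=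
  quatSymbol_lambda1_inseparable_general F α β a b h
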